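/- Under the same setup, if additionally σ := ε M ‖K‖_{L¹} / C < 1, then Φ is a strict contraction on B_ρ: for all v₁, v₂ ∈ B_ρ, ‖Φ(v₁) - Φ(v₂)‖_{L²} ≤ σ ‖v₁ - v₂‖_{L²}. Consequently Φ has a unique fixed point u_p ∈ B_ρ. -/

import Mathlib

/-!
Convolution with `K ∈ L¹` is a bounded operator on `L²` of norm at most `‖K‖₁` (Young's
inequality, from the weighted Cauchy–Schwarz inequality `(∫ k d)² ≤ (∫ k) (∫ k d²)` and Tonelli),
and `v ↦ g ∘ (u₀ + v)` is `M`-Lipschitz on `L²`. With `‖T‖ ≤ 1 / C` this makes `Φ` a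
`σ`-Lipschitz map on all of `L²`. Since `Φ (-u₀) = 0`, on `B_ρ` we get
`‖Φ v‖ ≤ σ ‖u₀ + v‖ ≤ σ (‖u₀‖ + 1) ≤ ρ` by the bound on `ε`, so Banach's fixed point theorem
applies on the complete set `B_ρ`.
-/

open MeasureTheory ENNReal

theorem ENNReal.sq_lintegral_mul_le {α : Type*} [MeasurableSpace α] {μ : Measure α}
    {w f : α → ℝ≥0∞} (hw : AEMeasurable w μ) (hf : AEMeasurable f μ) :
    (∫⁻ a, w a * f a ∂μ) ^ 2 ≤ (∫⁻ a, w a ∂μ) * ∫⁻ a, w a * f a ^ 2 ∂μ := by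
  have h_sqrt_sq : ∀ x : ℝ≥0∞, (x ^ 2) ^ (2⁻¹ : ℝ) = x := by
    simpa using pow_rpow_inv_natCast (n := 2) two_ne_zero
  have h_sq_sqrt : ∀ x : ℝ≥0∞, (x ^ (2⁻¹ : ℝ)) ^ 2 = x := by
    simpa using rpow_inv_natCast_pow (n := 2) two_ne_zero
  have h_pt : ∀ a, w a ^ (2⁻¹ : ℝ) * (w a * f a ^ 2) ^ (2⁻¹ : ℝ) = w a * f a := fun a => by
    rw [← mul_rpow_of_nonneg _ _ (by norm_num), ← h_sqrt_sq (w a * f a)]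
    ring_nf
  have h_holder := lintegral_mul_norm_pow_le (f := w) (g := fun a => w a * f a ^ 2) hw
    (hw.mul (hf.pow_const 2)) (p := 2⁻¹) (q := 2⁻¹) (by norm_num) (by norm_num) (by norm_num)
  simp only [h_pt] at h_holder
  calc (∫⁻ a, w a * f a ∂μ) ^ 2
      ≤ ((∫⁻ a, w a ∂μ) ^ (2⁻¹ : ℝ) * (∫⁻ a, w a * f a ^ 2 ∂μ) ^ (2⁻¹ : ℝ)) ^ 2 := by
        gcongr
    _ = (∫⁻ a, w a ∂μ) * ∫⁻ a, w a * f a ^ 2 ∂μ := by rw [mul_pow, h_sq_sqrt, h_sq_sqrt]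

theorem eLpNorm_two_sq_eq_lintegral {α E : Type*} [MeasurableSpace α] {μ : Measure α}
    [NormedAddCommGroup E] (f : α → E) :
    eLpNorm f 2 μ ^ 2 = ∫⁻ x, ‖f x‖ₑ ^ 2 ∂μ := by
  simpa [ENNReal.rpow_two] using
    eLpNorm_nnreal_pow_eq_lintegral (f := f) (μ := μ) (p := 2) two_ne_zero

section Convolution

variable {G : Type*} [MeasurableSpace G] [AddCommGroup G] [MeasurableAdd₂ G] [MeasurableNeg G]
  {μ : Measure G} [SFinite μ] [μ.IsAddLeftInvariant] {K d : G → ℝ}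

theorem MeasureTheory.AEStronglyMeasurable.sub_mul_prod (hK : AEStronglyMeasurable K μ)
    (hd : AEStronglyMeasurable d μ) :
    AEStronglyMeasurable (fun p : G × G => K (p.1 - p.2) * d p.2) (μ.prod μ) :=
  (hK.comp_quasiMeasurePreserving (quasiMeasurePreserving_sub_of_right_invariant μ μ)).mul
    hd.comp_snd

variable [μ.IsNegInvariant]

/-- Young's inequality `‖k ⋆ d‖₂ ≤ ‖k‖₁ ‖d‖₂` for nonnegative functions, squared. -/
theorem lintegral_sq_lintegral_sub_mul_le {k d : G → ℝ≥0∞} (hk : AEMeasurable k μ)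
    (hd : AEMeasurable d μ) :
    ∫⁻ x, (∫⁻ y, k (x - y) * d y ∂μ) ^ 2 ∂μ ≤ (∫⁻ t, k t ∂μ) ^ 2 * ∫⁻ y, d y ^ 2 ∂μ := by
  have hk_sub_left : ∀ x, AEMeasurable (fun y => k (x - y)) μ := fun x =>
    hk.comp_quasiMeasurePreserving (Measure.measurePreserving_sub_left μ x).quasiMeasurePreserving
  have hk_sub_right : ∀ y, AEMeasurable (fun x => k (x - y)) μ := fun y =>
    hk.comp_quasiMeasurePreserving (measurePreserving_sub_right μ y).quasiMeasurePreserving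
  have h_prod : AEMeasurable (fun p : G × G => k (p.1 - p.2) * d p.2 ^ 2) (μ.prod μ) :=
    (hk.comp_quasiMeasurePreserving (quasiMeasurePreserving_sub_of_right_invariant μ μ)).mul
      (hd.pow_const 2).comp_snd
  have h_inner : ∀ y, ∫⁻ x, k (x - y) * d y ^ 2 ∂μ = (∫⁻ t, k t ∂μ) * d y ^ 2 := fun y => by
    rw [lintegral_mul_const'' _ (hk_sub_right y), lintegral_sub_right_eq_self]
  calc ∫⁻ x, (∫⁻ y, k (x - y) * d y ∂μ) ^ 2 ∂μ
      ≤ ∫⁻ x, (∫⁻ t, k t ∂μ) * ∫⁻ y, k (x - y) * d y ^ 2 ∂μ ∂μ := by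
        refine lintegral_mono fun x => ?_
        simpa only [lintegral_sub_left_eq_self] using
          ENNReal.sq_lintegral_mul_le (hk_sub_left x) hd
    _ = (∫⁻ t, k t ∂μ) * ∫⁻ y, ∫⁻ x, k (x - y) * d y ^ 2 ∂μ ∂μ := by
        rw [lintegral_const_mul'' _ h_prod.lintegral_prod_right', lintegral_lintegral_swap h_prod]
    _ = (∫⁻ t, k t ∂μ) ^ 2 * ∫⁻ y, d y ^ 2 ∂μ := by
        rw [lintegral_congr h_inner, lintegral_const_mul'' _ (hd.pow_const 2), pow_two, mul_assoc]

theorem lintegral_sq_lintegral_enorm_sub_mul_le (hK : AEStronglyMeasurable K μ)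
    (hd : AEStronglyMeasurable d μ) :
    ∫⁻ x, (∫⁻ y, ‖K (x - y) * d y‖ₑ ∂μ) ^ 2 ∂μ ≤ (eLpNorm K 1 μ * eLpNorm d 2 μ) ^ 2 := by
  simp_rw [enorm_mul]
  refine (lintegral_sq_lintegral_sub_mul_le hK.enorm hd.enorm).trans_eq ?_
  rw [mul_pow, eLpNorm_one_eq_lintegral_enorm, eLpNorm_two_sq_eq_lintegral]

theorem ae_integrable_sub_mul (hK : Integrable K μ) (hd : MemLp d 2 μ) :
    ∀ᵐ x ∂μ, Integrable (fun y => K (x - y) * d y) μ := by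
  have h_meas : AEMeasurable (fun x => (∫⁻ y, ‖K (x - y) * d y‖ₑ ∂μ) ^ 2) μ :=
    ((hK.1.sub_mul_prod hd.1).enorm.lintegral_prod_right').pow_const 2
  have h_fin : ∫⁻ x, (∫⁻ y, ‖K (x - y) * d y‖ₑ ∂μ) ^ 2 ∂μ ≠ ∞ :=
    ((lintegral_sq_lintegral_enorm_sub_mul_le hK.1 hd.1).trans_lt (pow_lt_top
      (ENNReal.mul_lt_top (memLp_one_iff_integrable.2 hK).eLpNorm_lt_top hd.eLpNorm_lt_top))).ne
  filter_upwards [ae_lt_top' h_meas h_fin] with x hx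
  refine ⟨?_, by simpa [HasFiniteIntegral] using hx⟩
  exact (hK.1.comp_quasiMeasurePreserving
    (Measure.measurePreserving_sub_left μ x).quasiMeasurePreserving).mul hd.1

theorem eLpNorm_integral_sub_mul_le (hK : AEStronglyMeasurable K μ)
    (hd : AEStronglyMeasurable d μ) :
    eLpNorm (fun x => ∫ y, K (x - y) * d y ∂μ) 2 μ ≤ eLpNorm K 1 μ * eLpNorm d 2 μ := by
  rw [← ENNReal.pow_le_pow_left_iff two_ne_zero, eLpNorm_two_sq_eq_lintegral]
  refine le_trans (lintegral_mono fun x => ?_) (lintegral_sq_lintegral_enorm_sub_mul_le hK hd)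
  gcongr
  exact enorm_integral_le_lintegral_enorm _

theorem memLp_integral_sub_mul (hK : Integrable K μ) (hd : MemLp d 2 μ) :
    MemLp (fun x => ∫ y, K (x - y) * d y ∂μ) 2 μ :=
  ⟨(hK.1.sub_mul_prod hd.1).integral_prod_right',
    (eLpNorm_integral_sub_mul_le hK.1 hd.1).trans_lt
      (ENNReal.mul_lt_top (memLp_one_iff_integrable.2 hK).eLpNorm_lt_top hd.eLpNorm_lt_top)⟩

theorem norm_toLp_integral_sub_mul_le (hK : Integrable K μ) (f : Lp ℝ 2 μ) :
    ‖(memLp_integral_sub_mul hK (Lp.memLp f)).toLp _‖ ≤ (∫ x, |K x| ∂μ) * ‖f‖ := by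
  have hK_norm : (eLpNorm K 1 μ).toReal = ∫ x, |K x| ∂μ := by
    simp only [← Real.norm_eq_abs, integral_norm_eq_lintegral_enorm hK.1,
      eLpNorm_one_eq_lintegral_enorm]
  rw [Lp.norm_toLp, Lp.norm_def, ← hK_norm, ← toReal_mul]
  exact toReal_mono (ENNReal.mul_ne_top (memLp_one_iff_integrable.2 hK).eLpNorm_ne_top
    (Lp.eLpNorm_ne_top f)) (eLpNorm_integral_sub_mul_le hK.1 (Lp.aestronglyMeasurable f))

variable (μ) in
noncomputable def convolutionL2 (K : G → ℝ) (hK : Integrable K μ) : Lp ℝ 2 μ →L[ℝ] Lp ℝ 2 μ :=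
  LinearMap.mkContinuous
    { toFun := fun f => (memLp_integral_sub_mul hK (Lp.memLp f)).toLp _
      map_add' := fun f₁ f₂ => by
        rw [← MemLp.toLp_add]
        refine MemLp.toLp_congr _ _ ?_
        filter_upwards [ae_integrable_sub_mul hK (Lp.memLp f₁),
          ae_integrable_sub_mul hK (Lp.memLp f₂)] with x h₁ h₂
        rw [Pi.add_apply, ← integral_add h₁ h₂]
        refine integral_congr_ae ?_
        filter_upwards [Lp.coeFn_add f₁ f₂] with y hy
        rw [hy, Pi.add_apply, mul_add]
      map_smul' := fun c f => by
        rw [← MemLp.toLp_const_smul]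
        refine MemLp.toLp_congr _ _ (ae_of_all _ fun x => ?_)
        rw [Pi.smul_apply, smul_eq_mul, RingHom.id_apply, ← integral_const_mul]
        refine integral_congr_ae ?_
        filter_upwards [Lp.coeFn_smul c f] with y hy
        rw [hy, Pi.smul_apply, smul_eq_mul, mul_left_comm] }
    (∫ x, |K x| ∂μ) (norm_toLp_integral_sub_mul_le hK)

theorem norm_convolutionL2_apply_le (hK : Integrable K μ) (f : Lp ℝ 2 μ) :
    ‖convolutionL2 μ K hK f‖ ≤ (∫ x, |K x| ∂μ) * ‖f‖ :=
  norm_toLp_integral_sub_mul_le hK f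

theorem convolutionL2_eq_toLp (hK : Integrable K μ) {f : Lp ℝ 2 μ} (hfd : f =ᵐ[μ] d)
    (hd : MemLp (fun x => ∫ y, K (x - y) * d y ∂μ) 2 μ) :
    convolutionL2 μ K hK f = hd.toLp _ :=
  MemLp.toLp_congr (memLp_integral_sub_mul hK (Lp.memLp f)) hd
    (ae_of_all _ fun _ => integral_congr_ae (hfd.mono fun y hy => by dsimp only; rw [hy]))

theorem norm_convolutionL2_compLp_sub_le (hK : Integrable K μ) {g : ℝ → ℝ} {c : NNReal}
    (hg : LipschitzWith c g) (g0 : g 0 = 0) (f₁ f₂ : Lp ℝ 2 μ) :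
    ‖convolutionL2 μ K hK (hg.compLp g0 f₁) - convolutionL2 μ K hK (hg.compLp g0 f₂)‖ ≤
      (∫ x, |K x| ∂μ) * c * ‖f₁ - f₂‖ := by
  rw [← map_sub, mul_assoc]
  exact (norm_convolutionL2_apply_le hK _).trans <|
    mul_le_mul_of_nonneg_left (hg.norm_compLp_sub_le g0 f₁ f₂)
      (integral_nonneg fun _ => abs_nonneg _)

end Convolution

theorem lipschitzWith_of_abs_deriv_le {g : ℝ → ℝ} {M : ℝ} (hg : Differentiable ℝ g)
    (hg' : ∀ z, |deriv g z| ≤ M) : LipschitzWith M.toNNReal g :=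
  lipschitzWith_of_nnnorm_deriv_le hg fun z => by
    rw [← NNReal.coe_le_coe, coe_nnnorm, Real.coe_toNNReal _ ((abs_nonneg _).trans (hg' z))]
    exact hg' z

theorem existsUnique_fixedPoint_of_norm_sub_le {E : Type*} [NormedAddCommGroup E]
    [CompleteSpace E] {f : E → E} {σ ρ : ℝ} (hσ : σ < 1)
    (hf : ∀ x y, ‖f x - f y‖ ≤ σ * ‖x - y‖) (hρ : 0 ≤ ρ) (hf_ball : ∀ x, ‖x‖ ≤ ρ → ‖f x‖ ≤ ρ) :
    ∃! x, ‖x‖ ≤ ρ ∧ f x = x := by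
  have hf_contr : ContractingWith σ.toNNReal f :=
    ⟨Real.toNNReal_lt_one.2 hσ,
      LipschitzWith.of_dist_le' fun x y => by simpa only [dist_eq_norm] using hf x y⟩
  have hf_maps : Set.MapsTo f (Metric.closedBall 0 ρ) (Metric.closedBall 0 ρ) := fun x hx => by
    simpa using hf_ball x (by simpa using hx)
  obtain ⟨y, hy, hfy, -⟩ := ContractingWith.exists_fixedPoint'
    Metric.isClosed_closedBall.isComplete hf_maps (hf_contr.restrict hf_maps)
    (Metric.mem_closedBall_self hρ) (edist_ne_top _ _)
  exact ⟨y, ⟨mem_closedBall_zero_iff.1 hy, hfy⟩, fun z hz => hf_contr.fixedPoint_unique' hz.2 hfy⟩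

theorem strict_contraction_and_fixed_point_general (C M ε ρ : ℝ) (hC : 0 < C)
    (hε : 0 < ε) (hρ0 : 0 < ρ) (hρ1 : ρ ≤ 1)
    (K : ℝ → ℝ) (hK : Integrable K (volume : Measure ℝ))
    (u₀ : Lp ℝ 2 (volume : Measure ℝ))
    (g : ℝ → ℝ) (hg : Differentiable ℝ g) (hg0 : g 0 = 0)
    (hg' : ∀ z : ℝ, |deriv g z| ≤ M)
    (T : Lp ℝ 2 (volume : Measure ℝ) →ₗ[ℝ] Lp ℝ 2 (volume : Measure ℝ))
    (hT : ∀ h : Lp ℝ 2 (volume : Measure ℝ), ‖T h‖ ≤ ‖h‖ / C)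
    (hconv : ∀ v : Lp ℝ 2 (volume : Measure ℝ),
      MemLp (fun x : ℝ => ∫ y : ℝ, K (x - y) * g (u₀ y + v y)) 2 (volume : Measure ℝ))
    (Φ : Lp ℝ 2 (volume : Measure ℝ) → Lp ℝ 2 (volume : Measure ℝ))
    (hΦ : ∀ v, Φ v = ε • T ((hconv v).toLp _))
    (hεbound : ε ≤ ρ * C / (M * (∫ x : ℝ, |K x|) * (‖u₀‖ + 1)))
    (σ : ℝ) (hσdef : σ = ε * M * (∫ x : ℝ, |K x|) / C) (hσ : σ < 1) :
    (∀ v₁ v₂ : Lp ℝ 2 (volume : Measure ℝ), ‖v₁‖ ≤ ρ → ‖v₂‖ ≤ ρ →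
      ‖Φ v₁ - Φ v₂‖ ≤ σ * ‖v₁ - v₂‖) ∧
    (∃! u_p : Lp ℝ 2 (volume : Measure ℝ), ‖u_p‖ ≤ ρ ∧ Φ u_p = u_p) := by
  have hM : 0 ≤ M := (abs_nonneg _).trans (hg' 0)
  have hg_lip := lipschitzWith_of_abs_deriv_le hg hg'
  set N := fun v => convolutionL2 volume K hK (hg_lip.compLp hg0 (u₀ + v))
  have hΦ_eq : ∀ v, Φ v = ε • T (N v) := fun v => by
    refine (hΦ v).trans (congrArg (ε • T ·) (convolutionL2_eq_toLp hK ?_ (hconv v)).symm)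
    filter_upwards [hg_lip.coeFn_compLp hg0 (u₀ + v), Lp.coeFn_add u₀ v] with y h₁ h₂
    rw [h₁, Function.comp_apply, h₂, Pi.add_apply]
  have h_lip : ∀ v₁ v₂, ‖Φ v₁ - Φ v₂‖ ≤ σ * ‖v₁ - v₂‖ := fun v₁ v₂ =>
    calc ‖Φ v₁ - Φ v₂‖ = ε * ‖T (N v₁ - N v₂)‖ := by
          rw [hΦ_eq, hΦ_eq, ← smul_sub, ← map_sub, norm_smul, Real.norm_of_nonneg hε.le]
      _ ≤ ε * (‖N v₁ - N v₂‖ / C) := by gcongr; exact hT _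
      _ ≤ ε * ((∫ x, |K x|) * M * ‖v₁ - v₂‖ / C) := by
          gcongr
          simpa [Real.coe_toNNReal _ hM] using
            norm_convolutionL2_compLp_sub_le hK hg_lip hg0 (u₀ + v₁) (u₀ + v₂)
      _ = σ * ‖v₁ - v₂‖ := by rw [hσdef]; ring
  have hΦ_zero : Φ (-u₀) = 0 := by simp [hΦ_eq, N, LipschitzWith.compLp_zero]
  have h_maps : ∀ v, ‖v‖ ≤ ρ → ‖Φ v‖ ≤ ρ := fun v hv =>
    calc ‖Φ v‖ = ‖Φ v - Φ (-u₀)‖ := by rw [hΦ_zero, sub_zero]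
      _ ≤ σ * (‖u₀‖ + 1) := (h_lip v (-u₀)).trans <| by
          gcongr
          · rw [hσdef]; positivity
          · rw [sub_neg_eq_add, add_comm]; exact (norm_add_le _ _).trans (by linarith)
      _ = ε * (M * (∫ x, |K x|) * (‖u₀‖ + 1)) / C := by rw [hσdef]; ring
      _ ≤ ρ := div_le_of_le_mul₀ hC.le hρ0.le <|
          mul_le_of_le_div₀ (by positivity) (by positivity) hεbound
  exact ⟨fun v₁ v₂ _ _ => h_lip v₁ v₂,
    existsUnique_fixedPoint_of_norm_sub_le hσ h_lip hρ0.le h_maps⟩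

theorem strict_contraction_and_fixed_point (C M ε ρ : ℝ) (hC : 0 < C) (hM : 0 < M)
    (hε : 0 < ε) (hρ0 : 0 < ρ) (hρ1 : ρ ≤ 1)
    (K : ℝ → ℝ) (hK : Integrable K (volume : Measure ℝ))
    (u₀ : Lp ℝ 2 (volume : Measure ℝ))
    (g : ℝ → ℝ) (hg : Differentiable ℝ g) (hg0 : g 0 = 0)
    (hg' : ∀ z : ℝ, |deriv g z| ≤ M)
    (T : Lp ℝ 2 (volume : Measure ℝ) →ₗ[ℝ] Lp ℝ 2 (volume : Measure ℝ))
    (hT : ∀ h : Lp ℝ 2 (volume : Measure ℝ), ‖T h‖ ≤ ‖h‖ / C)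
    (hconv : ∀ v : Lp ℝ 2 (volume : Measure ℝ),
      MemLp (fun x : ℝ => ∫ y : ℝ, K (x - y) * g (u₀ y + v y)) 2 (volume : Measure ℝ))
    (Φ : Lp ℝ 2 (volume : Measure ℝ) → Lp ℝ 2 (volume : Measure ℝ))
    (hΦ : ∀ v, Φ v = ε • T ((hconv v).toLp _))
    (hεbound : ε ≤ ρ * C / (M * (∫ x : ℝ, |K x|) * (‖u₀‖ + 1)))
    (σ : ℝ) (hσdef : σ = ε * M * (∫ x : ℝ, |K x|) / C) (hσ : σ < 1) :
    (∀ v₁ v₂ : Lp ℝ 2 (volume : Measure ℝ), ‖v₁‖ ≤ ρ → ‖v₂‖ ≤ ρ →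
      ‖Φ v₁ - Φ v₂‖ ≤ σ * ‖v₁ - v₂‖) ∧
    (∃! u_p : Lp ℝ 2 (volume : Measure ℝ), ‖u_p‖ ≤ ρ ∧ Φ u_p = u_p) :=
  strict_contraction_and_fixed_point_general C M ε ρ hC hε hρ0 hρ1 K hK u₀ g hg hg0 hg' T hT hconv Φ
    hΦ hεbound σ hσdef hσ
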